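/- arXiv:1603.02464 — 3 statements merged into one kernel-verified Lean document; each statement's English description precedes it below -/
import Mathlib

section
/- For the round circle γ(t) = (L/2π)(cos(2πt/L), sin(2πt/L)), the Möbius energy E(γ) = ∬_{S_L × S_L} (1/|γ(t)−γ(s)|² − 1/d_{S_L}(t,s)²) ds dt equals 4, independently of L. -/
open MeasureTheory Real
open scoped ENNReal Real

/-- The intrinsic distance on the circle `ℝ/Lℝ` between (representatives of) two
parameters. -/
noncomputable def circleDist (L t s : ℝ) : ℝ := ⨅ k : ℤ, |t - s - k * L|

section cd
variable {L : ℝ}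

lemma cd_bdd (u : ℝ) : BddBelow (Set.range fun k : ℤ => |u - k * L|) :=
  ⟨0, by rintro x ⟨k, rfl⟩; positivity⟩

lemma cd_zero (u : ℝ) : circleDist L u 0 = ⨅ k : ℤ, |u - k * L| := by
  simp [circleDist]

lemma cd_sub (t s : ℝ) : circleDist L t s = circleDist L (t - s) 0 := by
  simp [circleDist]

lemma cd_eq (hL : 0 < L) {u : ℝ} (h0 : 0 ≤ u) (h1 : u ≤ L) :
    circleDist L u 0 = min u (L - u) := by
  rw [cd_zero]
  apply le_antisymm
  · apply le_min
    · have := ciInf_le (cd_bdd (L := L) u) (0 : ℤ)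
      simpa [abs_of_nonneg h0] using this
    · have := ciInf_le (cd_bdd (L := L) u) (1 : ℤ)
      simp only [Int.cast_one, one_mul] at this
      calc (⨅ k : ℤ, |u - k * L|) ≤ |u - L| := this
        _ = L - u := by rw [abs_sub_comm, abs_of_nonneg (by linarith)]
  · apply le_ciInf
    intro k
    rcases le_or_gt k 0 with hk | hk
    · have : (k : ℝ) * L ≤ 0 := mul_nonpos_of_nonpos_of_nonneg (by exact_mod_cast hk) (by linarith)
      calc min u (L - u) ≤ u := min_le_left _ _
        _ ≤ |u - k * L| := by rw [abs_of_nonneg (by linarith)]; linarith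
    · have hk1 : (1 : ℝ) ≤ (k : ℝ) := by exact_mod_cast hk
      have : L ≤ (k : ℝ) * L := by nlinarith
      calc min u (L - u) ≤ L - u := min_le_right _ _
        _ ≤ |u - k * L| := by rw [abs_sub_comm, abs_of_nonneg (by linarith)]; linarith

lemma cd_shift (u : ℝ) (m : ℤ) : circleDist L (u + m * L) 0 = circleDist L u 0 := by
  rw [cd_zero, cd_zero, iInf, iInf]
  congr 1
  ext x
  constructor
  · rintro ⟨k, rfl⟩
    exact ⟨k - m, by push_cast; ring_nf⟩
  · rintro ⟨k, rfl⟩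
    exact ⟨k + m, by push_cast; ring_nf⟩

lemma cd_le_add (u v : ℝ) : circleDist L u 0 ≤ circleDist L v 0 + |u - v| := by
  rw [cd_zero, cd_zero, ← sub_le_iff_le_add]
  apply le_ciInf
  intro k
  rw [sub_le_iff_le_add]
  calc (⨅ k : ℤ, |u - k * L|) ≤ |u - k * L| := ciInf_le (cd_bdd u) k
    _ ≤ |v - k * L| + |u - v| := by
      have : u - k*L = (v - k*L) + (u - v) := by ring
      rw [this]; exact abs_add_le _ _

lemma cd_lipschitz : LipschitzWith 1 (fun u => circleDist L u 0) := by
  apply LipschitzWith.of_dist_le_mul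
  intro u v
  rw [Real.dist_eq, Real.dist_eq, NNReal.coe_one, one_mul, abs_sub_le_iff]
  refine ⟨?_, ?_⟩
  · have := cd_le_add (L := L) u v; linarith
  · have := cd_le_add (L := L) v u; rw [abs_sub_comm] at this; linarith

lemma cd_nonneg (u : ℝ) : 0 ≤ circleDist L u 0 := by
  rw [cd_zero]
  exact le_ciInf fun k => abs_nonneg _

lemma cd_continuous : Continuous (fun u => circleDist L u 0) := cd_lipschitz.continuous
end cd

section chord
variable {L : ℝ} (hL : 0 < L)

lemma chord_sq {γ : ℝ → EuclideanSpace ℝ (Fin 2)}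
    (hγ : ∀ t, γ t = (L / (2 * π)) •
      (WithLp.equiv 2 (Fin 2 → ℝ)).symm
        ![Real.cos (2 * π * t / L), Real.sin (2 * π * t / L)]) (t s : ℝ) :
    dist (γ t) (γ s) ^ 2 = (L / π) ^ 2 * Real.sin (π * (t - s) / L) ^ 2 := by
  have hπ : (0:ℝ) < π := Real.pi_pos
  set a := 2 * π * t / L
  set b := 2 * π * s / L
  have hd : dist (γ t) (γ s) ^ 2 =
      (L / (2*π))^2 * ((Real.cos a - Real.cos b)^2 + (Real.sin a - Real.sin b)^2) := by
    rw [hγ t, hγ s, EuclideanSpace.dist_eq]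
    rw [Real.sq_sqrt (by positivity)]
    simp [a, b, Fin.sum_univ_two, PiLp.smul_apply, smul_eq_mul,
      Real.dist_eq, ← sub_mul, mul_comm, sq_abs, mul_sub]
    ring
  rw [hd]
  have hcos : (Real.cos a - Real.cos b)^2 + (Real.sin a - Real.sin b)^2
      = 2 - 2 * Real.cos (a - b) := by
    have := Real.cos_sub a b
    nlinarith [Real.sin_sq_add_cos_sq a, Real.sin_sq_add_cos_sq b]
  rw [hcos]
  have hab : a - b = 2 * (π * (t - s) / L) := by
    field_simp [a, b]; ring
  rw [hab]
  have h2 := Real.sin_sq_eq_half_sub (π * (t - s) / L)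
  have hc : Real.cos (2 * (π * (t - s) / L)) = 1 - 2 * Real.sin (π * (t - s) / L) ^ 2 := by
    linarith
  rw [hc]
  have hπ' : π ≠ 0 := ne_of_gt hπ
  field_simp
  ring
end chord

noncomputable def rcF (L u : ℝ) : ℝ :=
  (π / L) ^ 2 / Real.sin (π * u / L) ^ 2 - 1 / (circleDist L u 0) ^ 2

section f
variable {L : ℝ}

lemma rcF_measurable : Measurable (rcF L) := by
  unfold rcF
  apply Measurable.sub
  · exact Measurable.div measurable_const
      (((Real.continuous_sin.comp (by continuity)).pow 2).measurable)
  · exact Measurable.div measurable_const ((cd_continuous.pow 2).measurable)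

lemma sin_sq_shift (hL : L ≠ 0) (u : ℝ) (m : ℤ) :
    Real.sin (π * (u + m * L) / L) ^ 2 = Real.sin (π * u / L) ^ 2 := by
  have : π * (u + m * L) / L = π * u / L + m * π := by field_simp
  rw [this, Real.sin_add, Real.sin_int_mul_pi]
  have h1 : Real.cos ((m : ℝ) * π) ^ 2 = 1 := by
    have := Real.sin_sq_add_cos_sq ((m : ℝ) * π)
    rw [Real.sin_int_mul_pi] at this
    nlinarith
  nlinarith [h1]

lemma rcF_shift (hL : L ≠ 0) (u : ℝ) (m : ℤ) : rcF L (u + m * L) = rcF L u := by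
  unfold rcF
  rw [sin_sq_shift hL u m, cd_shift]

lemma cd_neg (u : ℝ) : circleDist L (-u) 0 = circleDist L u 0 := by
  rw [cd_zero, cd_zero, iInf, iInf]
  congr 1
  ext x
  constructor
  · rintro ⟨k, rfl⟩
    exact ⟨-k, by push_cast; rw [← abs_neg]; ring_nf⟩
  · rintro ⟨k, rfl⟩
    exact ⟨-k, by push_cast; rw [← abs_neg]; ring_nf⟩

lemma rcF_symm (hL : L ≠ 0) (u : ℝ) : rcF L (L - u) = rcF L u := by
  have h1 : Real.sin (π * (L - u) / L) ^ 2 = Real.sin (π * u / L) ^ 2 := by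
    have : π * (L - u) / L = π - π * u / L := by field_simp
    rw [this, Real.sin_pi_sub]
  have h2 : circleDist L (L - u) 0 = circleDist L u 0 := by
    have : L - u = -u + (1 : ℤ) * L := by push_cast; ring
    rw [this, cd_shift, cd_neg]
  unfold rcF
  rw [h1, h2]

lemma sub_sin_le {x : ℝ} (hx : 0 ≤ x) : x - Real.sin x ≤ x ^ 3 / 2 := by
  have key : ∀ y : ℝ, HasDerivAt (fun y => y ^ 3 / 2 - y + Real.sin y)
      (3 * y ^ 2 / 2 - 1 + Real.cos y) y := by
    intro y
    have h1 : HasDerivAt (fun y : ℝ => y ^ 3 / 2) (3 * y ^ 2 / 2) y := by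
      simpa using (hasDerivAt_pow 3 y).div_const 2
    exact (h1.sub (hasDerivAt_id y)).add (Real.hasDerivAt_sin y)
  have mono : MonotoneOn (fun y => y ^ 3 / 2 - y + Real.sin y) (Set.Ici (0:ℝ)) := by
    apply monotoneOn_of_deriv_nonneg (convex_Ici 0)
    · exact (Continuous.continuousOn (by continuity))
    · intro y _
      exact (key y).differentiableAt.differentiableWithinAt
    · intro y _
      rw [(key y).deriv]
      nlinarith [Real.one_sub_sq_div_two_le_cos (x := y)]
  have := mono (Set.self_mem_Ici) (Set.mem_Ici.2 hx) hx
  simp at this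
  linarith
end f

section fbound
variable {L : ℝ}

lemma rcF_bound_half (hL : 0 < L) {u : ℝ} (h0 : 0 < u) (h1 : u ≤ L / 2) :
    0 ≤ rcF L u ∧ rcF L u ≤ π ^ 4 / (4 * L ^ 2) := by
  have hπ : (0:ℝ) < π := Real.pi_pos
  set x := π * u / L with hx
  have hx0 : 0 < x := by positivity
  have hx1 : x ≤ π / 2 := by
    rw [hx, div_le_div_iff₀ hL (by norm_num : (0:ℝ) < 2)]
    nlinarith
  have hs0 : 0 < Real.sin x := Real.sin_pos_of_pos_of_lt_pi hx0 (by linarith)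
  have hs1 : Real.sin x ≤ x := Real.sin_le hx0.le
  have hs2 : 2 / π * x ≤ Real.sin x := Real.mul_le_sin hx0.le hx1
  have hs3 : x - Real.sin x ≤ x ^ 3 / 2 := sub_sin_le hx0.le
  have hcd : circleDist L u 0 = u := by
    rw [cd_eq hL h0.le (by linarith), min_eq_left (by linarith)]
  have hux : u = L * x / π := by rw [hx]; field_simp
  have hrc : rcF L u = (π / L) ^ 2 * (1 / Real.sin x ^ 2 - 1 / x ^ 2) := by
    unfold rcF
    rw [hcd, ← hx, hux]
    field_simp
  rw [hrc]
  constructor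
  · have : 1 / x ^ 2 ≤ 1 / Real.sin x ^ 2 := by
      apply one_div_le_one_div_of_le (by positivity)
      nlinarith
    have h4 : (0:ℝ) < (π / L) ^ 2 := by positivity
    nlinarith
  · have key : 1 / Real.sin x ^ 2 - 1 / x ^ 2 ≤ π ^ 2 / 4 := by
      rw [div_sub_div _ _ (by positivity) (by positivity), div_le_div_iff₀ (by positivity) (by norm_num)]
      have e1 : x ^ 2 - Real.sin x ^ 2 = (x - Real.sin x) * (x + Real.sin x) := by ring
      have e2 : (x - Real.sin x) * (x + Real.sin x) ≤ (x ^ 3 / 2) * (2 * x) := by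
        apply mul_le_mul hs3 (by linarith) (by positivity) (by positivity)
      have e3 : (2 / π * x) ^ 2 * x ^ 2 ≤ Real.sin x ^ 2 * x ^ 2 := by
        apply mul_le_mul_of_nonneg_right _ (by positivity)
        exact pow_le_pow_left₀ (by positivity) hs2 2
      calc (1 * x ^ 2 - Real.sin x ^ 2 * 1) * 4 ≤ (x ^ 3 / 2 * (2 * x)) * 4 := by nlinarith
        _ ≤ π ^ 2 * (Real.sin x ^ 2 * x ^ 2) := by
            have : π ^ 2 * ((2 / π * x) ^ 2 * x ^ 2) = 4 * x ^ 4 := by field_simp; ring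
            nlinarith [e3]
    calc (π / L) ^ 2 * (1 / Real.sin x ^ 2 - 1 / x ^ 2) ≤ (π / L) ^ 2 * (π ^ 2 / 4) := by
          apply mul_le_mul_of_nonneg_left key (by positivity)
      _ = π ^ 4 / (4 * L ^ 2) := by field_simp

lemma rcF_bound (hL : 0 < L) {u : ℝ} (h0 : 0 < u) (h1 : u < L) :
    0 ≤ rcF L u ∧ rcF L u ≤ π ^ 4 / (4 * L ^ 2) := by
  rcases le_or_gt u (L / 2) with h | h
  · exact rcF_bound_half hL h0 h
  · have := rcF_bound_half hL (u := L - u) (by linarith) (by linarith)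
    rwa [rcF_symm hL.ne'] at this

lemma rcF_bound' (hL : 0 < L) {u : ℝ} (h : ∀ k : ℤ, u ≠ k * L) :
    0 ≤ rcF L u ∧ rcF L u ≤ π ^ 4 / (4 * L ^ 2) := by
  set m : ℤ := ⌊u / L⌋ with hm
  set r : ℝ := u - m * L with hr
  have hru : u = r + m * L := by rw [hr]; ring
  have h0 : 0 ≤ r := by
    rw [hr, sub_nonneg]
    calc (m : ℝ) * L ≤ (u / L) * L := by
          apply mul_le_mul_of_nonneg_right (Int.floor_le _) hL.le
      _ = u := by field_simp
  have h1 : r < L := by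
    rw [hr, sub_lt_iff_lt_add]
    have : u / L < m + 1 := Int.lt_floor_add_one _
    calc u = (u / L) * L := by field_simp
      _ < ((m : ℝ) + 1) * L := by apply mul_lt_mul_of_pos_right this hL
      _ = L + m * L := by ring
  have hr0 : 0 < r := by
    rcases h0.lt_or_eq with h' | h'
    · exact h'
    · exact absurd (by rw [hru, ← h']; ring) (h m)
  have := rcF_bound hL hr0 h1
  rwa [hru, rcF_shift hL.ne']

lemma cd_pos (hL : 0 < L) {u : ℝ} (h : ∀ k : ℤ, u ≠ k * L) : 0 < circleDist L u 0 := by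
  set m : ℤ := ⌊u / L⌋ with hm
  set r : ℝ := u - m * L with hr
  have hru : u = r + m * L := by rw [hr]; ring
  have h0 : 0 ≤ r := by
    rw [hr, sub_nonneg]
    calc (m : ℝ) * L ≤ (u / L) * L := by
          apply mul_le_mul_of_nonneg_right (Int.floor_le _) hL.le
      _ = u := by field_simp
  have h1 : r < L := by
    rw [hr, sub_lt_iff_lt_add]
    have : u / L < m + 1 := Int.lt_floor_add_one _
    calc u = (u / L) * L := by field_simp
      _ < ((m : ℝ) + 1) * L := by apply mul_lt_mul_of_pos_right this hL
      _ = L + m * L := by ring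
  have hr0 : 0 < r := by
    rcases h0.lt_or_eq with h' | h'
    · exact h'
    · exact absurd (by rw [hru, ← h']; ring) (h m)
  rw [hru, cd_shift, cd_eq hL hr0.le h1.le]
  exact lt_min hr0 (by linarith)
end fbound

section integral
variable {L : ℝ}

noncomputable def Gprim (L u : ℝ) : ℝ :=
  u⁻¹ - (π / L) * (Real.cos (π * u / L) / Real.sin (π * u / L))

lemma rcF_integrableOn (hL : 0 < L) : IntegrableOn (rcF L) (Set.Icc 0 L) := by
  apply Integrable.mono' (integrable_const (π ^ 4 / (4 * L ^ 2)))
    rcF_measurable.aestronglyMeasurable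
  have h1 : ∀ᵐ u ∂(volume.restrict (Set.Icc 0 L)), u ∈ Set.Icc 0 L :=
    ae_restrict_mem measurableSet_Icc
  have h2 : ∀ᵐ u ∂(volume.restrict (Set.Icc 0 L)), u ∉ ({0, L} : Set ℝ) := by
    refine ae_restrict_of_ae ?_
    refine measure_eq_zero_iff_ae_notMem.mp ?_
    exact Set.Finite.measure_zero ((Set.finite_singleton L).insert 0) _
  filter_upwards [h1, h2] with u hu hu'
  simp only [Set.mem_insert_iff, Set.mem_singleton_iff, not_or] at hu'
  have h0 : 0 < u := lt_of_le_of_ne hu.1 (Ne.symm hu'.1)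
  have h1 : u < L := lt_of_le_of_ne hu.2 hu'.2
  have := rcF_bound hL h0 h1
  rw [Real.norm_eq_abs, abs_le]
  constructor <;> [linarith [this.1]; exact this.2]
end integral

section deriv
variable {L : ℝ}

lemma Gprim_hasDeriv (hL : 0 < L) {u : ℝ} (h0 : 0 < u) (h1 : u < L) :
    HasDerivAt (Gprim L) ((π / L) ^ 2 / Real.sin (π * u / L) ^ 2 - 1 / u ^ 2) u := by
  have hπ : (0:ℝ) < π := Real.pi_pos
  have hs : Real.sin (π * u / L) ≠ 0 := by
    apply ne_of_gt
    apply Real.sin_pos_of_pos_of_lt_pi (by positivity)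
    rw [div_lt_iff₀ hL]
    nlinarith
  have hx : HasDerivAt (fun v : ℝ => π * v / L) (π / L) u := by
    simpa using ((hasDerivAt_id u).const_mul π).div_const L
  have hcos : HasDerivAt (fun v => Real.cos (π * v / L))
      (-Real.sin (π * u / L) * (π / L)) u := (Real.hasDerivAt_cos _).comp u hx
  have hsin : HasDerivAt (fun v => Real.sin (π * v / L))
      (Real.cos (π * u / L) * (π / L)) u := (Real.hasDerivAt_sin _).comp u hx
  have hquot := hcos.div hsin hs
  have hinv := hasDerivAt_inv (ne_of_gt h0)
  have := hinv.sub (hquot.const_mul (π / L))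
  convert this using 1
  · rfl
  · rfl
  · rfl
  have hpyth := Real.sin_sq_add_cos_sq (π * u / L)
  have hnum : -Real.sin (π * u / L) * (π / L) * Real.sin (π * u / L) -
      Real.cos (π * u / L) * (Real.cos (π * u / L) * (π / L)) = -(π / L) := by
    linear_combination (-(π / L)) * hpyth
  rw [hnum]
  field_simp
  ring

lemma integral_eps (hL : 0 < L) {ε : ℝ} (h0 : 0 < ε) (h1 : ε ≤ L / 2) :
    ∫ u in ε..(L / 2), rcF L u = Gprim L (L / 2) - Gprim L ε := by
  apply intervalIntegral.integral_eq_sub_of_hasDerivAt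
  · intro u hu
    rw [Set.uIcc_of_le h1] at hu
    have hu0 : 0 < u := lt_of_lt_of_le h0 hu.1
    have hu1 : u < L := by
      have := hu.2; linarith
    have heq : rcF L u = (π / L) ^ 2 / Real.sin (π * u / L) ^ 2 - 1 / u ^ 2 := by
      unfold rcF
      rw [cd_eq hL hu0.le hu1.le, min_eq_left (by linarith [hu.2])]
    rw [heq]
    exact Gprim_hasDeriv hL hu0 hu1
  · apply IntegrableOn.intervalIntegrable
    apply (rcF_integrableOn hL).mono_set
    rw [Set.uIcc_of_le h1]
    apply Set.Icc_subset_Icc <;> linarith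

end deriv

section lims
open Filter Topology
variable {L : ℝ}

lemma Gprim_bound (hL : 0 < L) {ε : ℝ} (h0 : 0 < ε) (h1 : ε ≤ L / 2) :
    |Gprim L ε| ≤ π ^ 3 / (2 * L ^ 2) * ε := by
  have hπ : (0:ℝ) < π := Real.pi_pos
  set x := π * ε / L with hxdef
  have hx0 : 0 < x := by positivity
  have hx1 : x ≤ π / 2 := by
    rw [hxdef, div_le_div_iff₀ hL (by norm_num : (0:ℝ) < 2)]; nlinarith
  have hs0 : 0 < Real.sin x := Real.sin_pos_of_pos_of_lt_pi hx0 (by linarith)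
  have hs2 : 2 / π * x ≤ Real.sin x := Real.mul_le_sin hx0.le hx1
  have hεx : ε = L * x / π := by rw [hxdef]; field_simp
  have hGe : Gprim L ε = (π / L) * ((Real.sin x - x * Real.cos x) / (x * Real.sin x)) := by
    unfold Gprim
    rw [← hxdef, hεx]
    field_simp
  have hnum : |Real.sin x - x * Real.cos x| ≤ x ^ 3 := by
    have e1 : Real.sin x - x * Real.cos x = (Real.sin x - x) + x * (1 - Real.cos x) := by ring
    calc |Real.sin x - x * Real.cos x| ≤ |Real.sin x - x| + |x * (1 - Real.cos x)| := by
          rw [e1]; exact abs_add_le _ _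
      _ ≤ x ^ 3 / 2 + x * (x ^ 2 / 2) := by
          gcongr
          · rw [abs_sub_comm, abs_of_nonneg (by linarith [Real.sin_le hx0.le])]
            exact sub_sin_le hx0.le
          · rw [abs_mul, abs_of_nonneg hx0.le, abs_of_nonneg (by linarith [Real.cos_le_one x])]
            have := Real.one_sub_sq_div_two_le_cos (x := x)
            nlinarith
      _ = x ^ 3 := by ring
  have hden : 2 / π * x ^ 2 ≤ x * Real.sin x := by nlinarith
  rw [hGe, abs_mul, abs_of_nonneg (by positivity : (0:ℝ) ≤ π / L), abs_div,
    abs_of_nonneg (by positivity : (0:ℝ) ≤ x * Real.sin x)]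
  calc π / L * (|Real.sin x - x * Real.cos x| / (x * Real.sin x))
      ≤ π / L * (x ^ 3 / (2 / π * x ^ 2)) := by
        apply mul_le_mul_of_nonneg_left _ (by positivity)
        exact div_le_div₀ (by positivity) hnum (by positivity) hden
    _ = π ^ 2 / (2 * L) * x := by field_simp
    _ = π ^ 3 / (2 * L ^ 2) * ε := by rw [hxdef]; field_simp

lemma rcF_intInt (hL : 0 < L) {a b : ℝ} (ha : 0 ≤ a) (hab : a ≤ b) (hb : b ≤ L) :
    IntervalIntegrable (rcF L) volume a b := by
  apply IntegrableOn.intervalIntegrable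
  apply (rcF_integrableOn hL).mono_set
  rw [Set.uIcc_of_le hab]
  exact Set.Icc_subset_Icc ha hb

lemma integral_half (hL : 0 < L) : ∫ u in (0:ℝ)..(L / 2), rcF L u = 2 / L := by
  have hπ : (0:ℝ) < π := Real.pi_pos
  have hL2 : (0:ℝ) < L / 2 := by linarith
  set J := ∫ u in (0:ℝ)..(L / 2), rcF L u with hJ
  set Φ : Filter ℝ := nhdsWithin 0 (Set.Ioo 0 (L / 2)) with hΦ
  have hne : Φ.NeBot := left_nhdsWithin_Ioo_neBot hL2
  have key : ∀ᶠ ε in Φ, J - (∫ u in (0:ℝ)..ε, rcF L u) = Gprim L (L / 2) - Gprim L ε := by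
    filter_upwards [self_mem_nhdsWithin] with ε hε
    have hadd := intervalIntegral.integral_add_adjacent_intervals
      (rcF_intInt hL le_rfl hε.1.le (by linarith [hε.2]))
      (rcF_intInt hL hε.1.le hε.2.le (by linarith))
    have := integral_eps hL hε.1 hε.2.le
    rw [hJ, ← hadd, this]
    ring
  have hIO : IntegrableOn (rcF L) (Set.uIcc (0:ℝ) (L / 2)) volume := by
    apply (rcF_integrableOn hL).mono_set
    rw [Set.uIcc_of_le hL2.le]
    exact Set.Icc_subset_Icc le_rfl (by linarith)
  have hprim : Filter.Tendsto (fun ε => ∫ u in (0:ℝ)..ε, rcF L u) Φ (𝓝 0) := by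
    have hcont := intervalIntegral.continuousOn_primitive_interval (μ := volume)
      (a := (0:ℝ)) (b := L / 2) (f := rcF L) hIO
    have h0 : (0:ℝ) ∈ Set.uIcc (0:ℝ) (L / 2) := Set.left_mem_uIcc
    have := (hcont 0 h0).tendsto
    rw [intervalIntegral.integral_same] at this
    exact this.mono_left (nhdsWithin_mono 0 (by
      rw [Set.uIcc_of_le hL2.le]
      exact Set.Ioo_subset_Icc_self))
  have hGlim : Filter.Tendsto (fun ε => Gprim L ε) Φ (𝓝 0) := by
    refine squeeze_zero_norm' (a := fun ε => π ^ 3 / (2 * L ^ 2) * ε) ?_ ?_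
    · filter_upwards [self_mem_nhdsWithin] with ε hε
      rw [Real.norm_eq_abs]
      exact Gprim_bound hL hε.1 hε.2.le
    · have : Filter.Tendsto (fun ε : ℝ => π ^ 3 / (2 * L ^ 2) * ε) (𝓝 0) (𝓝 0) := by
        have := (((continuous_const : Continuous fun _ : ℝ => π ^ 3 / (2 * L ^ 2)).mul continuous_id)).tendsto (0:ℝ)
        simpa [Pi.mul_def] using this
      exact this.mono_left nhdsWithin_le_nhds
  have t1 : Filter.Tendsto (fun ε => J - (∫ u in (0:ℝ)..ε, rcF L u)) Φ (𝓝 J) := by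
    simpa using tendsto_const_nhds.sub hprim
  have t2 : Filter.Tendsto (fun ε => Gprim L (L / 2) - Gprim L ε) Φ (𝓝 (Gprim L (L / 2))) := by
    simpa using tendsto_const_nhds.sub hGlim
  have hJG : J = Gprim L (L / 2) := tendsto_nhds_unique (t1.congr' key) t2
  rw [hJG]
  unfold Gprim
  have h1 : π * (L / 2) / L = π / 2 := by field_simp
  rw [h1, Real.cos_pi_div_two]
  simp [inv_div]

lemma integral_full (hL : 0 < L) : ∫ u in (0:ℝ)..L, rcF L u = 4 / L := by
  have hadd := intervalIntegral.integral_add_adjacent_intervals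
    (rcF_intInt hL le_rfl (by linarith) (by linarith))
    (rcF_intInt hL (by linarith : (0:ℝ) ≤ L / 2) (by linarith) le_rfl)
  have hsymm : ∫ u in (L / 2)..L, rcF L u = ∫ u in (0:ℝ)..(L / 2), rcF L u := by
    have hcs := intervalIntegral.integral_comp_sub_left (a := (0:ℝ)) (b := L / 2) (rcF L) L
    have : (∫ x in (0:ℝ)..(L / 2), rcF L (L - x)) = ∫ x in (0:ℝ)..(L / 2), rcF L x :=
      intervalIntegral.integral_congr (fun x _ => rcF_symm hL.ne' x)
    rw [this] at hcs
    rw [hcs]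
    have h2 : L - L / 2 = L / 2 := by ring
    rw [h2, sub_zero]
  rw [← hadd, hsymm, integral_half hL]
  ring
end lims

section assemble
variable {L : ℝ}

lemma badSet_null (hL : 0 < L) (t : ℝ) :
    (volume : Measure ℝ) (Set.range fun k : ℤ => t - k * L) = 0 :=
  Set.Countable.measure_zero (Set.countable_range _) _

lemma integrand_eq (hL : 0 < L) {γ : ℝ → EuclideanSpace ℝ (Fin 2)}
    (hγ : ∀ t, γ t = (L / (2 * π)) •
      (WithLp.equiv 2 (Fin 2 → ℝ)).symm
        ![Real.cos (2 * π * t / L), Real.sin (2 * π * t / L)])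
    (t s : ℝ) (h : ∀ k : ℤ, t - s ≠ k * L) :
    ((ENNReal.ofReal (dist (γ t) (γ s)))⁻¹) ^ 2 -
      ((ENNReal.ofReal (circleDist L t s))⁻¹) ^ 2 = ENNReal.ofReal (rcF L (t - s)) := by
  have hπ : (0:ℝ) < π := Real.pi_pos
  have hsin : Real.sin (π * (t - s) / L) ≠ 0 := by
    intro hzero
    rcases Real.sin_eq_zero_iff.mp hzero with ⟨k, hk⟩
    apply h k
    have hk2 : π * (t - s) = π * (k * L) := by
      rw [eq_div_iff hL.ne'] at hk
      linear_combination -hk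
    have := mul_left_cancel₀ (ne_of_gt hπ) hk2
    linarith
  have hcsq : dist (γ t) (γ s) ^ 2 = (L / π) ^ 2 * Real.sin (π * (t - s) / L) ^ 2 :=
    chord_sq hγ t s
  have hc : 0 < dist (γ t) (γ s) := by
    rcases (dist_nonneg : 0 ≤ dist (γ t) (γ s)).lt_or_eq with h' | h'
    · exact h'
    · exfalso
      have : (L / π) ^ 2 * Real.sin (π * (t - s) / L) ^ 2 = 0 := by rw [← hcsq, ← h']; ring
      have h2 : (L / π) ^ 2 ≠ 0 := by positivity
      have := (mul_eq_zero.mp this).resolve_left h2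
      exact hsin (pow_eq_zero_iff (n := 2) (by norm_num) |>.mp this)
  have hd : 0 < circleDist L t s := by
    rw [cd_sub]; exact cd_pos hL h
  have e1 : ((ENNReal.ofReal (dist (γ t) (γ s)))⁻¹) ^ 2
      = ENNReal.ofReal ((dist (γ t) (γ s) ^ 2)⁻¹) := by
    rw [← ENNReal.inv_pow, ← ENNReal.ofReal_pow dist_nonneg,
      ← ENNReal.ofReal_inv_of_pos (by positivity)]
  have e2 : ((ENNReal.ofReal (circleDist L t s))⁻¹) ^ 2
      = ENNReal.ofReal ((circleDist L t s ^ 2)⁻¹) := by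
    rw [← ENNReal.inv_pow, ← ENNReal.ofReal_pow hd.le,
      ← ENNReal.ofReal_inv_of_pos (by positivity)]
  rw [e1, e2, ← ENNReal.ofReal_sub _ (by positivity)]
  congr 1
  unfold rcF
  rw [hcsq, ← cd_sub]
  field_simp
end assemble

section main
variable {L : ℝ}

lemma inner_integral (hL : 0 < L) {γ : ℝ → EuclideanSpace ℝ (Fin 2)}
    (hγ : ∀ t, γ t = (L / (2 * π)) •
      (WithLp.equiv 2 (Fin 2 → ℝ)).symm
        ![Real.cos (2 * π * t / L), Real.sin (2 * π * t / L)]) (t : ℝ) :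
    (∫⁻ s in Set.Icc (0 : ℝ) L,
        (((ENNReal.ofReal (dist (γ t) (γ s)))⁻¹) ^ 2 -
          ((ENNReal.ofReal (circleDist L t s))⁻¹) ^ 2)) = ENNReal.ofReal (4 / L) := by
  have hB : ∀ᵐ s ∂(volume.restrict (Set.Icc (0:ℝ) L)), ∀ k : ℤ, t - s ≠ k * L := by
    refine ae_restrict_of_ae ((measure_eq_zero_iff_ae_notMem.mp (badSet_null hL t)).mono ?_)
    intro s hs k hk
    exact hs ⟨k, show t - (k:ℝ) * L = s by linarith⟩
  rw [lintegral_congr_ae (hB.mono fun s hs => integrand_eq hL hγ t s hs)]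
  have hAESM : AEStronglyMeasurable (fun s => rcF L (t - s))
      (volume.restrict (Set.Icc (0:ℝ) L)) :=
    (rcF_measurable.comp (measurable_const.sub measurable_id)).aestronglyMeasurable
  have hInt : Integrable (fun s => rcF L (t - s)) (volume.restrict (Set.Icc (0:ℝ) L)) := by
    apply Integrable.mono' (integrable_const (π ^ 4 / (4 * L ^ 2))) hAESM
    filter_upwards [hB] with s hs
    have := rcF_bound' hL hs
    rw [Real.norm_eq_abs, abs_le]
    exact ⟨by linarith [this.1], this.2⟩
  have hnn : 0 ≤ᵐ[volume.restrict (Set.Icc (0:ℝ) L)] fun s => rcF L (t - s) := by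
    filter_upwards [hB] with s hs
    exact (rcF_bound' hL hs).1
  rw [← MeasureTheory.ofReal_integral_eq_lintegral_ofReal hInt hnn]
  congr 1
  have h1 : ∫ s in Set.Icc (0:ℝ) L, rcF L (t - s) = ∫ s in Set.Ioc (0:ℝ) L, rcF L (t - s) :=
    integral_Icc_eq_integral_Ioc
  rw [h1, ← intervalIntegral.integral_of_le hL.le,
    intervalIntegral.integral_comp_sub_left (rcF L) t, sub_zero]
  have hper : Function.Periodic (rcF L) L := fun u => by
    simpa using rcF_shift hL.ne' u 1
  have hshift := hper.intervalIntegral_add_eq (t - L) 0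
  have h2 : t - L + L = t := by ring
  rw [h2, zero_add] at hshift
  rw [hshift, integral_full hL]

theorem moebiusEnergy_round_circle' (hL : 0 < L)
    (γ : ℝ → EuclideanSpace ℝ (Fin 2))
    (hγ : ∀ t, γ t = (L / (2 * π)) •
      (WithLp.equiv 2 (Fin 2 → ℝ)).symm
        ![Real.cos (2 * π * t / L), Real.sin (2 * π * t / L)]) :
    (∫⁻ t in Set.Icc (0 : ℝ) L, ∫⁻ s in Set.Icc (0 : ℝ) L,
        (((ENNReal.ofReal (dist (γ t) (γ s)))⁻¹) ^ 2 -
          ((ENNReal.ofReal (circleDist L t s))⁻¹) ^ 2)) = 4 := by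
  have h1 : (∫⁻ t in Set.Icc (0 : ℝ) L, ∫⁻ s in Set.Icc (0 : ℝ) L,
        (((ENNReal.ofReal (dist (γ t) (γ s)))⁻¹) ^ 2 -
          ((ENNReal.ofReal (circleDist L t s))⁻¹) ^ 2))
      = ∫⁻ _ in Set.Icc (0 : ℝ) L, ENNReal.ofReal (4 / L) :=
    lintegral_congr fun t => inner_integral hL hγ t
  rw [h1, setLIntegral_const, Real.volume_Icc, sub_zero,
    ← ENNReal.ofReal_mul (by positivity), div_mul_cancel₀ _ hL.ne']
  simp
end main

/-- The Möbius energy of the round circle of length `L` equals `4`,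
independently of `L`. -/
theorem moebiusEnergy_round_circle (L : ℝ) (hL : 0 < L)
    (γ : ℝ → EuclideanSpace ℝ (Fin 2))
    (hγ : ∀ t, γ t = (L / (2 * π)) •
      (WithLp.equiv 2 (Fin 2 → ℝ)).symm
        ![Real.cos (2 * π * t / L), Real.sin (2 * π * t / L)]) :
    (∫⁻ t in Set.Icc (0 : ℝ) L, ∫⁻ s in Set.Icc (0 : ℝ) L,
        (((ENNReal.ofReal (dist (γ t) (γ s)))⁻¹) ^ 2 -
          ((ENNReal.ofReal (circleDist L t s))⁻¹) ^ 2)) = 4 :=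
  moebiusEnergy_round_circle' hL γ hγ
end

section
/- Among all n triples of consecutive vertices, the regular n-gon of side length 1 minimizes the maximal discrete curvature among equilateral closed polygons with n segments: for any closed equilateral polygon p in ℝ^d with n vertices and unit side lengths, the sum of exterior angles satisfies Σ_{i=1}^n φ_i ≥ 2π, and hence the maximal exterior angle max_i φ_i ≥ 2π/n, with equality if and only if all exterior angles equal 2π/n. Consequently maxCurv(p) = max_i 2 tan(φ_i/2) ≥ 2 tan(π/n) = maxCurv(g_n). -/
open Real
open scoped Real

/-!
Fenchel's inequality `∑ φᵢ ≥ 2π` is proved by induction on the number of vertices, removing one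
vertex `Y` at a time: replacing the path `X → Y → Z` by the chord `X → Z` does not increase the
total turning, by the triangle inequality for angles between vectors together with the
exterior-angle theorem for the triangle `XYZ`. The induction starts at the 2-gon, which turns by
`π` at each of its two vertices. The bounds on the largest angle follow by averaging; unit sides
and `n ≥ 3` keep every exterior angle below `π`, so monotonicity of `tan` on `[0, π/2)` gives the
curvature bound.
-/

open Finset Function InnerProductGeometry

theorem Function.Periodic.map_emod {α : Type*} {f : ℤ → α} {n : ℤ} (hf : Periodic f n) (i : ℤ) :
    f (i % n) = f i := by
  rw [Int.emod_def, mul_comm]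
  exact hf.sub_int_mul_eq _

theorem Function.periodic_comp_emod {α : Type*} (f : ℤ → α) (n : ℤ) :
    Periodic (fun i => f (i % n)) n := fun i => by
  simp only [Int.add_emod_right]

theorem Function.Periodic.exists_mem_range_eq {α : Type*} {f : ℤ → α} {n : ℕ}
    (hf : Periodic f n) (hn : n ≠ 0) (i : ℤ) : ∃ k ∈ range n, f k = f i := by
  have h0 := Int.emod_nonneg i (Int.natCast_ne_zero.2 hn)
  have hlt := Int.emod_lt_of_pos i (Int.natCast_pos.2 (Nat.pos_of_ne_zero hn))
  refine ⟨(i % n).toNat, mem_range.2 (by omega), ?_⟩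
  rw [Int.toNat_of_nonneg h0, hf.map_emod]

theorem injOn_Ico_of_dvd_sub {α : Type*} {q : ℤ → α} {n : ℤ}
    (h : ∀ i j, q i = q j → n ∣ i - j) : Set.InjOn q (Set.Ico 0 n) := fun i hi j hj hij => by
  have := Int.eq_zero_of_abs_lt_dvd (h i j hij) (abs_sub_lt_iff.2 ⟨by grind, by grind⟩)
  omega

theorem Finset.div_card_le_sup'_of_le_sum {ι : Type*} {s : Finset ι} (hs : s.Nonempty)
    {f : ι → ℝ} {c : ℝ} (h : c ≤ ∑ i ∈ s, f i) : c / #s ≤ s.sup' hs f := by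
  have := s.sum_le_card_nsmul f (s.sup' hs f) fun i hi => le_sup' f hi
  rw [nsmul_eq_mul] at this
  rw [div_le_iff₀ (by exact_mod_cast hs.card_pos), mul_comm]
  linarith

theorem Finset.eq_div_card_of_sup'_le {ι : Type*} {s : Finset ι} (hs : s.Nonempty)
    {f : ι → ℝ} {c : ℝ} (h : c ≤ ∑ i ∈ s, f i) (hsup : s.sup' hs f ≤ c / #s) :
    ∀ i ∈ s, f i = c / #s := by
  have hle : ∀ i ∈ s, f i ≤ c / #s := (sup'_le_iff hs f).1 hsup
  refine (sum_eq_sum_iff_of_le hle).1 (le_antisymm (sum_le_sum hle) ?_)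
  rwa [sum_const, nsmul_eq_mul, mul_div_cancel₀ _ (by exact_mod_cast hs.card_pos.ne')]

theorem Finset.two_mul_tan_le_sup'_two_mul_tan_half {ι : Type*} {s : Finset ι} (hs : s.Nonempty)
    {f : ι → ℝ} {a : ℝ} (ha : 0 ≤ a) (hlt : ∀ i ∈ s, f i < π) (hle : 2 * a ≤ s.sup' hs f) :
    2 * tan a ≤ s.sup' hs fun i => 2 * tan (f i / 2) := by
  obtain ⟨i, hi, hmax⟩ := exists_mem_eq_sup' hs f
  have hai : a ≤ f i / 2 := by linarith
  calc 2 * tan a ≤ 2 * tan (f i / 2) := by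
        gcongr 2 * ?_
        exact strictMonoOn_tan.monotoneOn ⟨by linarith [pi_pos], by linarith [hlt i hi]⟩
          ⟨by linarith [pi_pos], by linarith [hlt i hi]⟩ hai
    _ ≤ _ := le_sup' (fun i => 2 * tan (f i / 2)) hi

section Polygon

variable {V : Type*} [NormedAddCommGroup V] [InnerProductSpace ℝ V]

theorem InnerProductGeometry.angle_sub_sub_lt_pi {x y z : V} (h : ‖y - x‖ = ‖z - y‖)
    (hxz : x ≠ z) : angle (y - x) (z - y) < π := by
  refine (angle_le_pi _ _).lt_of_ne fun hπ => hxz ?_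
  have h0 : angle (x - y) (z - y) = 0 := by rw [← neg_sub, angle_neg_left, hπ, sub_self]
  simpa using eq_of_angle_eq_zero_of_norm_eq h0 (by rwa [norm_sub_rev])

theorem InnerProductGeometry.angle_add_angle_le_angle_add_angle_add_angle (a b d : V) {c : V}
    (hc : c ≠ 0) : angle a (b + c) + angle (b + c) d ≤ angle a b + angle b c + angle c d := by
  have hab := angle_le_angle_add_angle a b (b + c)
  have hcd := angle_le_angle_add_angle (b + c) c d
  have hbc := angle_eq_angle_add_add_angle_add b hc
  rw [angle_comm (b + c) c] at hcd
  linarith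

noncomputable def exteriorAngle (q : ℤ → V) (i : ℤ) : ℝ := angle (q i - q (i - 1)) (q (i + 1) - q i)

theorem Function.Periodic.exteriorAngle {q : ℤ → V} {c : ℤ} (hq : Periodic q c) :
    Periodic (exteriorAngle q) c := fun i => by
  simp only [_root_.exteriorAngle, add_sub_right_comm, add_right_comm i c 1, hq _]

/-- `fun j => q (j % (m + 2))` is the closed polygon `q` with its vertex `q (m + 2)` removed. -/
theorem sum_exteriorAngle_emod_le {q : ℤ → V} (m : ℕ) (hq : Periodic q (m + 3))
    (hne : q (m + 2) ≠ q 0) :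
    ∑ i ∈ range (m + 2), exteriorAngle (fun j => q (j % (m + 2))) i ≤
      ∑ i ∈ range (m + 3), exteriorAngle q i := by
  set q' : ℤ → V := fun j => q (j % (m + 2))
  have hq' : ∀ j : ℤ, 0 ≤ j → j < m + 2 → q' j = q j := fun j h0 h1 =>
    congrArg q (Int.emod_eq_of_lt h0 h1)
  have middle : ∀ i ∈ range m, exteriorAngle q' (i + 1 : ℕ) = exteriorAngle q (i + 1 : ℕ) := by
    intro i hi
    have hi' := mem_range.1 hi
    simp only [exteriorAngle]
    push_cast
    rw [hq' (i + 1) (by omega) (by omega), hq' (i + 1 - 1) (by omega) (by omega),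
      hq' (i + 1 + 1) (by omega) (by omega)]
  suffices key : exteriorAngle q' 0 + exteriorAngle q' (m + 1) ≤
      exteriorAngle q 0 + exteriorAngle q (m + 1) + exteriorAngle q (m + 2) by
    rw [sum_range_succ, sum_range_succ', sum_congr rfl middle, sum_range_succ, sum_range_succ,
      sum_range_succ']
    push_cast
    linarith
  have hq'per : Periodic q' (m + 2) := periodic_comp_emod q _
  have hprev : q' (-1) = q (m + 1) := by
    rw [← hq'per, hq' _ (by omega) (by omega)]
    ring_nf
  have hnext : q' (m + 1 + 1) = q 0 := by
    rw [add_assoc, one_add_one_eq_two, ← zero_add (m + 2 : ℤ), hq'per, hq' 0 le_rfl (by omega)]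
  have hq_prev : q (0 - 1) = q (m + 2) := by rw [← hq]; ring_nf
  have hq_next : q (m + 2 + 1) = q 0 := by rw [← hq 0]; ring_nf
  have e₁ : exteriorAngle q' 0 = angle (q 0 - q (m + 1)) (q 1 - q 0) := by
    simp [exteriorAngle, hprev, hq' 0 le_rfl (by omega), hq' 1 (by omega) (by omega)]
  have e₂ : exteriorAngle q' (m + 1) = angle (q (m + 1) - q m) (q 0 - q (m + 1)) := by
    simp [exteriorAngle, hnext, hq' (m + 1) (by omega) (by omega), hq' m (by omega) (by omega)]
  have e₃ : exteriorAngle q 0 = angle (q 0 - q (m + 2)) (q 1 - q 0) := by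
    rw [exteriorAngle, hq_prev, zero_add]
  have e₄ : exteriorAngle q (m + 1) = angle (q (m + 1) - q m) (q (m + 2) - q (m + 1)) := by
    simp only [exteriorAngle, add_sub_cancel_right, add_assoc, one_add_one_eq_two]
  have e₅ : exteriorAngle q (m + 2) = angle (q (m + 2) - q (m + 1)) (q 0 - q (m + 2)) := by
    rw [exteriorAngle, hq_next, show (m + 2 - 1 : ℤ) = m + 1 by ring]
  have cut := angle_add_angle_le_angle_add_angle_add_angle (q (m + 1) - q m)
    (q (m + 2) - q (m + 1)) (q 1 - q 0) (sub_ne_zero.2 hne.symm)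
  rw [sub_add_sub_cancel'] at cut
  linarith

theorem two_pi_le_sum_exteriorAngle {q : ℤ → V} {n : ℕ} (hn : 2 ≤ n) (hq : Periodic q n)
    (hinj : Set.InjOn q (Set.Ico 0 n)) : 2 * π ≤ ∑ i ∈ range n, exteriorAngle q i := by
  induction n, hn using Nat.le_induction generalizing q with
  | base =>
    have h10 : q 1 - q 0 ≠ 0 := sub_ne_zero.2 fun h => by simpa using hinj (by simp) (by simp) h
    have hm1 : q (-1) = q 1 := by rw [← hq]; norm_num
    have h2 : q 2 = q 0 := by simpa using hq 0
    simp only [sum_range_succ, sum_range_zero, exteriorAngle, Nat.cast_zero, Nat.cast_one,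
      zero_sub, zero_add, sub_self, one_add_one_eq_two, hm1, h2]
    rw [← neg_sub, angle_neg_self_of_nonzero h10, angle_self_neg_of_nonzero h10]
    linarith
  | succ n hn ih =>
    obtain ⟨m, rfl⟩ := Nat.exists_eq_add_of_le' hn
    push_cast at hq hinj ih ⊢
    have hq' : Set.EqOn q (fun j => q (j % (m + 2))) (Set.Ico 0 (m + 2)) := fun j hj =>
      congrArg q (Int.emod_eq_of_lt hj.1 hj.2).symm
    have hne : q (m + 2) ≠ q 0 := fun h => by
      have := hinj (by simp; omega) (by simp; omega) h
      omega
    refine (ih (periodic_comp_emod q _) ((hinj.mono ?_).congr hq')).trans ?_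
    · exact Set.Ico_subset_Ico_right (by omega)
    · exact sum_exteriorAngle_emod_le m (by convert hq using 1; ring) hne

end Polygon

/-- Fenchel's theorem for closed equilateral polygons and its consequence: the
regular `n`-gon minimizes the maximal discrete curvature. The sum of the
exterior angles is at least `2π`, hence the maximal exterior angle is at least
`2π/n`, with equality iff all exterior angles equal `2π/n`; consequently
`maxCurv(p) = max_i 2 tan(φ_i/2) ≥ 2 tan(π/n) = maxCurv(g_n)`. -/
theorem fenchel_polygon_maxCurv {d : ℕ} (n : ℕ) (hn : 3 ≤ n)
    (p : ℤ → EuclideanSpace ℝ (Fin d))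
    (hper : ∀ i : ℤ, p (i + n) = p i)
    (hunit : ∀ i : ℤ, dist (p (i + 1)) (p i) = 1)
    (hvert : ∀ i j : ℤ, p i = p j → (i - j) % (n : ℤ) = 0)
    (φ : ℤ → ℝ)
    (hφ : ∀ i : ℤ, φ i = InnerProductGeometry.angle (p i - p (i - 1)) (p (i + 1) - p i)) :
    2 * π ≤ (∑ i ∈ Finset.range n, φ i) ∧
    2 * π / n ≤ (Finset.range n).sup' (Finset.nonempty_range_iff.mpr (by omega)) (fun i => φ i) ∧
    ((Finset.range n).sup' (Finset.nonempty_range_iff.mpr (by omega)) (fun i => φ i) = 2 * π / n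
      ↔ ∀ i : ℤ, φ i = 2 * π / n) ∧
    2 * Real.tan (π / n) ≤
      (Finset.range n).sup' (Finset.nonempty_range_iff.mpr (by omega))
        (fun i => 2 * Real.tan (φ i / 2)) := by
  obtain rfl : φ = exteriorAngle p := funext hφ
  have hdvd : ∀ i j, p i = p j → (n : ℤ) ∣ i - j := fun i j h =>
    Int.dvd_of_emod_eq_zero (hvert i j h)
  have hne : (range n).Nonempty := nonempty_range_iff.mpr (by omega)
  have htotal := two_pi_le_sum_exteriorAngle (by omega) hper (injOn_Ico_of_dvd_sub hdvd)
  have hmax := div_card_le_sup'_of_le_sum hne htotal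
  rw [card_range] at hmax
  have hlt_pi : ∀ i, exteriorAngle p i < π := fun i => by
    refine angle_sub_sub_lt_pi ?_ fun h => ?_
    · rw [← dist_eq_norm, ← dist_eq_norm, hunit, ← hunit (i - 1), sub_add_cancel]
    · have := Int.le_of_dvd two_pos (by simpa using hdvd _ _ h.symm)
      omega
  refine ⟨htotal, hmax, ⟨fun h i => ?_, fun h => ?_⟩, ?_⟩
  · obtain ⟨k, hk, hki⟩ := (Function.Periodic.exteriorAngle hper).exists_mem_range_eq (by omega) i
    rw [← hki]
    simpa using eq_div_card_of_sup'_le hne htotal (by rw [h, card_range]) k hk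
  · rw [sup'_congr hne rfl fun i _ => h i, sup'_const]
  · exact two_mul_tan_le_sup'_two_mul_tan_half hne (by positivity) (fun i _ => hlt_pi i)
      (by rwa [← mul_div_assoc])
end

section
/- Let γ : S_L → ℝ^d be a closed curve of class C^{1,1} parametrized by arc length with Lipschitz constant of γ' equal to κ_max. Then for all t, s with d_{S_L}(t,s) ≤ π/κ_max (and d_{S_L}(t,s) ≤ L/2), the chord length satisfies |γ(t) − γ(s)| ≥ (2/κ_max)·sin(κ_max · d_{S_L}(t,s)/2). -/
open Real
open scoped Real

/-!
Tangents `T = γ'` at parameter distance `δ` have chord at most `κδ`, hence make an angle at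
most `2 arcsin (κδ/2)`. Subdividing `[u, w]` into `n` pieces and using the triangle inequality
for angles, `∠(T u, T w) ≤ 2n arcsin (κ|u - w|/2n) → κ|u - w|`. So for `m` the midpoint of
`[a, b]` and `κ (b - a) ≤ π`, `⟪T m, T u⟫ ≥ cos (κ (u - m))` on `[a, b]`, and integrating,
`‖γ b - γ a‖ ≥ ⟪T m, γ b - γ a⟫ ≥ ∫ cos (κ (u - m)) = (2/κ) sin (κ (b - a)/2)`.
On the circle, `d(t, s) = |t - (s + kL)|` for `k = round ((t - s)/L)`, and `γ (s + kL) = γ s`.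
-/

open Filter Topology InnerProductGeometry
open scoped RealInnerProductSpace

theorem tendsto_natCast_mul_arcsin_div (c : ℝ) :
    Tendsto (fun n : ℕ => (n : ℝ) * arcsin (c / n)) atTop (𝓝 c) := by
  have hderiv : HasDerivAt (fun t => arcsin (c * t)) c 0 := by
    simpa [Function.comp_def] using
      (hasDerivAt_arcsin (by norm_num) (by norm_num)).comp (0 : ℝ)
        ((hasDerivAt_id (0 : ℝ)).const_mul c)
  have hinv : Tendsto (fun n : ℕ => (n : ℝ)⁻¹) atTop (𝓝[>] 0) :=
    tendsto_inv_atTop_nhdsGT_zero.comp tendsto_natCast_atTop_atTop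
  simpa [Function.comp_def, div_eq_mul_inv] using hderiv.tendsto_slope_zero_right.comp hinv

theorem integral_cos_mul_sub_midpoint {κ : ℝ} (hκ : κ ≠ 0) (a b : ℝ) :
    ∫ u in a..b, cos (κ * (u - (a + b) / 2)) = 2 / κ * sin (κ * (b - a) / 2) := by
  simp_rw [mul_sub κ _ ((a + b) / 2)]
  rw [intervalIntegral.integral_comp_mul_sub (fun x => cos x) hκ, integral_cos,
    show κ * a - κ * ((a + b) / 2) = -(κ * (b - a) / 2) by ring,
    show κ * b - κ * ((a + b) / 2) = κ * (b - a) / 2 by ring, sin_neg, smul_eq_mul]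
  ring

section InnerProductSpace

variable {E : Type*} [NormedAddCommGroup E] [InnerProductSpace ℝ E]

theorem norm_sub_eq_two_mul_sin_half_angle {x y : E} (hx : ‖x‖ = 1) (hy : ‖y‖ = 1) :
    ‖x - y‖ = 2 * sin (angle x y / 2) := by
  have hcos := norm_sub_sq_eq_norm_sq_add_norm_sq_sub_two_mul_norm_mul_norm_mul_cos_angle x y
  have hhalf : cos (angle x y) = 1 - 2 * sin (angle x y / 2) ^ 2 := by
    have := cos_two_mul' (angle x y / 2)
    rw [mul_div_cancel₀ _ two_ne_zero, cos_sq'] at this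
    linarith
  have hsin : 0 ≤ sin (angle x y / 2) :=
    sin_nonneg_of_nonneg_of_le_pi (by linarith [angle_nonneg x y])
      (by linarith [angle_le_pi x y, pi_pos])
  rw [hx, hy, hhalf] at hcos
  nlinarith [norm_nonneg (x - y)]

theorem angle_le_two_mul_arcsin_of_norm_sub_le {x y : E} (hx : ‖x‖ = 1) (hy : ‖y‖ = 1)
    {c : ℝ} (h : ‖x - y‖ ≤ c) : angle x y ≤ 2 * arcsin (c / 2) := by
  have hhalf : angle x y / 2 = arcsin (‖x - y‖ / 2) := by
    rw [norm_sub_eq_two_mul_sin_half_angle hx hy, mul_div_cancel_left₀ _ two_ne_zero,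
      arcsin_sin (by linarith [angle_nonneg x y, pi_pos]) (by linarith [angle_le_pi x y])]
  linarith [monotone_arcsin (div_le_div_of_nonneg_right h zero_le_two)]

variable {f : ℝ → E} {κ : ℝ}

theorem angle_le_natCast_mul_of_lipschitz (hf : ∀ u, ‖f u‖ = 1)
    (hlip : ∀ u w, ‖f u - f w‖ ≤ κ * |u - w|) (u δ : ℝ) (n : ℕ) :
    angle (f u) (f (u + n * δ)) ≤ n * (2 * arcsin (κ * |δ| / 2)) := by
  induction n with
  | zero => simp [angle_self (norm_ne_zero_iff.mp ((hf u).trans_ne one_ne_zero))]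
  | succ n ih =>
    have hstep :
        angle (f (u + n * δ)) (f (u + (n + 1 : ℕ) * δ)) ≤ 2 * arcsin (κ * |δ| / 2) := by
      refine angle_le_two_mul_arcsin_of_norm_sub_le (hf _) (hf _) ((hlip _ _).trans_eq ?_)
      rw [← abs_neg]
      push_cast
      ring_nf
    calc angle (f u) (f (u + (n + 1 : ℕ) * δ))
        ≤ angle (f u) (f (u + n * δ)) + angle (f (u + n * δ)) (f (u + (n + 1 : ℕ) * δ)) :=
          angle_le_angle_add_angle _ _ _
      _ ≤ n * (2 * arcsin (κ * |δ| / 2)) + 2 * arcsin (κ * |δ| / 2) := add_le_add ih hstep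
      _ = (n + 1 : ℕ) * (2 * arcsin (κ * |δ| / 2)) := by push_cast; ring

theorem angle_le_mul_abs_sub_of_lipschitz (hf : ∀ u, ‖f u‖ = 1)
    (hlip : ∀ u w, ‖f u - f w‖ ≤ κ * |u - w|) (u w : ℝ) :
    angle (f u) (f w) ≤ κ * |u - w| := by
  have hlim := (tendsto_natCast_mul_arcsin_div (κ * |u - w| / 2)).const_mul 2
  rw [mul_div_cancel₀ _ two_ne_zero] at hlim
  refine ge_of_tendsto hlim ?_
  filter_upwards [eventually_ne_atTop 0] with n hn
  have hn' : (n : ℝ) ≠ 0 := Nat.cast_ne_zero.mpr hn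
  have hw : u + n * ((w - u) / n) = w := by field_simp; ring
  have := angle_le_natCast_mul_of_lipschitz hf hlip u ((w - u) / n) n
  rw [hw, abs_div, Nat.abs_cast, abs_sub_comm] at this
  rw [show κ * (|u - w| / n) / 2 = κ * |u - w| / 2 / n by ring] at this
  linarith

theorem cos_mul_abs_sub_le_inner_of_lipschitz (hf : ∀ u, ‖f u‖ = 1)
    (hlip : ∀ u w, ‖f u - f w‖ ≤ κ * |u - w|) {u w : ℝ} (h : κ * |u - w| ≤ π) :
    cos (κ * |u - w|) ≤ ⟪f u, f w⟫ := by
  rw [inner_eq_cos_angle_of_norm_eq_one (hf u) (hf w)]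
  exact cos_le_cos_of_nonneg_of_le_pi (angle_nonneg _ _) h
    (angle_le_mul_abs_sub_of_lipschitz hf hlip u w)

variable {γ : ℝ → E}

theorem integral_inner_deriv (hdiff : Differentiable ℝ γ) (hcont : Continuous (deriv γ))
    (v : E) (a b : ℝ) : ∫ u in a..b, ⟪v, deriv γ u⟫ = ⟪v, γ b - γ a⟫ := by
  rw [inner_sub_right]
  exact intervalIntegral.integral_eq_sub_of_hasDerivAt
    (fun u _ => ((innerSL ℝ v).hasFDerivAt.comp_hasDerivAt u (hdiff u).hasDerivAt))
    ((continuous_const.inner hcont).intervalIntegrable a b)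

theorem two_div_mul_sin_le_norm_sub (hκ : 0 < κ) (hdiff : Differentiable ℝ γ)
    (harc : ∀ t, ‖deriv γ t‖ = 1) (hlip : ∀ u w, ‖deriv γ u - deriv γ w‖ ≤ κ * |u - w|)
    {a b : ℝ} (hπ : κ * |b - a| ≤ π) :
    2 / κ * sin (κ * |b - a| / 2) ≤ ‖γ b - γ a‖ := by
  wlog hab : a ≤ b generalizing a b
  · simpa only [abs_sub_comm, norm_sub_rev] using
      this (by rwa [abs_sub_comm]) (le_of_not_ge hab)
  rw [abs_of_nonneg (sub_nonneg.mpr hab)] at hπ ⊢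
  set m := (a + b) / 2 with hm
  have hcont : Continuous (deriv γ) :=
    (LipschitzWith.of_dist_le' (by simpa [dist_eq_norm] using hlip)).continuous
  have hcos : ∀ u ∈ Set.Icc a b, cos (κ * (u - m)) ≤ ⟪deriv γ m, deriv γ u⟫ := by
    rintro u ⟨hau, hub⟩
    have hum : κ * |u - m| ≤ π := by
      have : |u - m| ≤ b - a := abs_le.mpr ⟨by linarith, by linarith⟩
      nlinarith
    rw [← cos_abs, abs_mul, abs_of_pos hκ, real_inner_comm]
    exact cos_mul_abs_sub_le_inner_of_lipschitz harc hlip hum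
  calc 2 / κ * sin (κ * (b - a) / 2) = ∫ u in a..b, cos (κ * (u - m)) :=
        (integral_cos_mul_sub_midpoint hκ.ne' a b).symm
    _ ≤ ∫ u in a..b, ⟪deriv γ m, deriv γ u⟫ :=
        intervalIntegral.integral_mono_on hab (Continuous.intervalIntegrable (by fun_prop) a b)
          ((continuous_const.inner hcont).intervalIntegrable a b) hcos
    _ = ⟪deriv γ m, γ b - γ a⟫ := integral_inner_deriv hdiff hcont _ a b
    _ ≤ ‖γ b - γ a‖ := by simpa [harc m] using real_inner_le_norm (deriv γ m) (γ b - γ a)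

end InnerProductSpace

theorem circleDist_le (L t s : ℝ) (k : ℤ) : circleDist L t s ≤ |t - s - k * L| :=
  ciInf_le ⟨0, by rintro _ ⟨k, rfl⟩; positivity⟩ k

theorem circleDist_le_abs_sub (L t s : ℝ) : circleDist L t s ≤ |t - s| := by
  simpa using circleDist_le L t s 0

theorem circleDist_eq_abs_sub_round (L t s : ℝ) :
    circleDist L t s = |t - s - round ((t - s) / L) * L| := by
  refine le_antisymm (circleDist_le L t s _) (le_ciInf fun k => ?_)
  rcases eq_or_ne L 0 with rfl | hL
  · simp
  have hscale : ∀ z : ℝ, |t - s - z * L| = |(t - s) / L - z| * |L| := fun z => by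
    rw [← abs_mul, sub_mul, div_mul_cancel₀ _ hL]
  rw [hscale, hscale]
  exact mul_le_mul_of_nonneg_right (round_le _ k) (abs_nonneg L)

theorem chord_estimate_C11_general {d : ℕ} (L kmax : ℝ) (hk : 0 < kmax)
    (γ : ℝ → EuclideanSpace ℝ (Fin d))
    (hper : ∀ t, γ (t + L) = γ t)
    (hdiff : Differentiable ℝ γ)
    (harc : ∀ t, ‖deriv γ t‖ = 1)
    (hlipderiv : ∀ t s : ℝ, ‖deriv γ t - deriv γ s‖ ≤ kmax * circleDist L t s) :
    ∀ t s : ℝ, circleDist L t s ≤ π / kmax → circleDist L t s ≤ L / 2 →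
      (2 / kmax) * Real.sin (kmax * circleDist L t s / 2) ≤ dist (γ t) (γ s) := by
  intro t s hπ _
  have hlip : ∀ u w, ‖deriv γ u - deriv γ w‖ ≤ kmax * |u - w| := fun u w =>
    (hlipderiv u w).trans (mul_le_mul_of_nonneg_left (circleDist_le_abs_sub L u w) hk.le)
  set k := round ((t - s) / L)
  have hshift : γ (s + k * L) = γ s := Function.Periodic.int_mul hper k s
  have hdist : circleDist L t s = |t - (s + k * L)| := by
    rw [circleDist_eq_abs_sub_round, sub_add_eq_sub_sub]
  rw [hdist] at hπ ⊢
  rw [dist_eq_norm, ← hshift]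
  exact two_div_mul_sin_le_norm_sub hk hdiff harc hlip ((le_div_iff₀' hk).mp hπ)

/-- Schur-type chord estimate: a closed `C^{1,1}` arc-length curve whose unit
tangent is `κ_max`-Lipschitz (w.r.t. the intrinsic metric) satisfies
`|γ(t) − γ(s)| ≥ (2/κ_max)·sin(κ_max·d(t,s)/2)` whenever `d(t,s) ≤ π/κ_max`. -/
theorem chord_estimate_C11 {d : ℕ} (L kmax : ℝ) (hL : 0 < L) (hk : 0 < kmax)
    (γ : ℝ → EuclideanSpace ℝ (Fin d))
    (hper : ∀ t, γ (t + L) = γ t)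
    (hdiff : Differentiable ℝ γ)
    (harc : ∀ t, ‖deriv γ t‖ = 1)
    (hlipderiv : ∀ t s : ℝ, ‖deriv γ t - deriv γ s‖ ≤ kmax * circleDist L t s) :
    ∀ t s : ℝ, circleDist L t s ≤ π / kmax → circleDist L t s ≤ L / 2 →
      (2 / kmax) * Real.sin (kmax * circleDist L t s / 2) ≤ dist (γ t) (γ s) :=
  chord_estimate_C11_general L kmax hk γ hper hdiff harc hlipderiv
end
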